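/- Let C be a [k, r_1, r_2, h_1, h_2, δ] hierarchical data-local MRC with middle-group supports A_i. Then for each i, the punctured code C|_{A_i} is an [r_1, r_2, h_2, δ] data-local maximally recoverable code. -/

import Mathlib

open Module

/-- The linear map restricting a word of length `n` to the coordinates in `E`
(puncturing on the complement of `E`). -/
def punctureTo (F : Type*) [Field F] {n : ℕ} (E : Finset (Fin n)) :
    (Fin n → F) →ₗ[F] (E → F) :=
  LinearMap.funLeft F F (fun j => (j : Fin n))

/-- A `[k, r₁, r₂, h₁, h₂, δ]` hierarchical data-local maximally recoverable code, with
`t₁ = k/r₁` middle groups `A i` of size `n₁ = r₁ + h₂ + t₂δ` and `t₂ = r₁/r₂` local groups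
`B i s ⊆ A i` of size `n₂ = r₂ + δ` each, length `n = k + h₁ + t₁(h₂ + t₂δ)`:
the code has dimension `k`, each local group carries `δ` local parities
(`dim C|_{B i s} ≤ r₂`), each middle group carries `h₂` further mid-level parities
(`dim C|_{A i} ≤ r₁`), and for every `E ⊆ [n]` of size `k + h₁` meeting each local group
in at most `r₂` coordinates and each middle group in exactly `r₁` coordinates, the
punctured code `C|_E` is a `[k+h₁, k, h₁+1]` MDS code. -/
structure IsHDLMRC (F : Type*) [Field F] [DecidableEq F]
    (k r1 r2 h1 h2 δ t1 t2 n : ℕ) where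
  C : Submodule F (Fin n → F)
  A : Fin t1 → Finset (Fin n)
  B : Fin t1 → Fin t2 → Finset (Fin n)
  hk : k = t1 * r1
  hr1 : r1 = t2 * r2
  hn : n = k + h1 + t1 * (h2 + t2 * δ)
  hA_card : ∀ i, (A i).card = r1 + h2 + t2 * δ
  hA_disj : ∀ i j, i ≠ j → Disjoint (A i) (A j)
  hB_sub : ∀ i s, B i s ⊆ A i
  hB_card : ∀ i s, (B i s).card = r2 + δ
  hB_disj : ∀ i s s', s ≠ s' → Disjoint (B i s) (B i s')
  hdim : finrank F C = k
  hloc : ∀ i s, finrank F (C.map (punctureTo F (B i s))) ≤ r2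
  hmid : ∀ i, finrank F (C.map (punctureTo F (A i))) ≤ r1
  hMR : ∀ E : Finset (Fin n), E.card = k + h1 →
    (∀ i s, (E ∩ B i s).card ≤ r2) → (∀ i, (E ∩ A i).card = r1) →
    finrank F (C.map (punctureTo F E)) = k ∧
      ∀ x ∈ C.map (punctureTo F E), x ≠ 0 → h1 + 1 ≤ hammingNorm x

/-!
An `r₁`-subset `S` of a middle group `A i` meeting every local group in at most `r₂` points
extends, by `r₂` points of every local group of the other middle groups together with the `h₁`
coordinates outside all middle groups, to a set `E` as in the HDL-MR property. Since `C|_E` has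
dimension `k` and distance `h₁ + 1`, it stays injective under restriction to any `k`-set `K` with
`S ⊆ K ⊆ E`; so `C|_K`, and a fortiori `C|_S`, is the full coordinate space. After deleting `δ`
points from each local group of `A i`, every `r₁`-subset of the remaining `r₁ + h₂` coordinates is
of this kind, which makes the punctured middle code MDS.
-/

theorem Submodule.finrank_map_eq_iff_disjoint_ker {K V W : Type*} [DivisionRing K]
    [AddCommGroup V] [Module K V] [AddCommGroup W] [Module K W] (p : Submodule K V)
    [FiniteDimensional K p] (f : V →ₗ[K] W) :
    finrank K (p.map f) = finrank K p ↔ Disjoint p (LinearMap.ker f) := by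
  rw [← LinearMap.range_domRestrict, Submodule.disjoint_iff_comap_eq_bot,
    ← LinearMap.ker_domRestrict, ← Submodule.finrank_eq_zero]
  have := (f.domRestrict p).finrank_range_add_finrank_ker
  omega

namespace Finset

variable {α ι : Type*} [DecidableEq α]

theorem exists_subset_biUnion_card_inter_eq [Fintype ι] {B : ι → Finset α}
    (hB : Pairwise fun s s' => Disjoint (B s) (B s')) {m : ℕ} (hm : ∀ s, m ≤ (B s).card) :
    ∃ S ⊆ univ.biUnion B, S.card = Fintype.card ι * m ∧ ∀ s, (S ∩ B s).card = m := by
  choose T hTB hTcard using fun s => exists_subset_card_eq (hm s)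
  have hT : ∀ s, univ.biUnion T ∩ B s = T s := by
    intro s
    ext x
    simp only [mem_inter, mem_biUnion, mem_univ, true_and]
    refine ⟨fun ⟨⟨s', hx⟩, hxB⟩ => ?_, fun hx => ⟨⟨s, hx⟩, hTB s hx⟩⟩
    obtain rfl : s' = s := by
      by_contra hne
      exact disjoint_left.mp (hB hne) (hTB s' hx) hxB
    exact hx
  refine ⟨univ.biUnion T, biUnion_mono fun s _ => hTB s, ?_, fun s => by rw [hT, hTcard]⟩
  rw [card_biUnion fun s _ s' _ hne => (hB hne).mono (hTB s) (hTB s')]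
  simp [hTcard]

theorem card_eq_sum_card_inter [Fintype ι] {B : ι → Finset α}
    (hB : Pairwise fun s s' => Disjoint (B s) (B s')) {D : Finset α} (hD : ∀ x ∈ D, ∃ s, x ∈ B s) :
    D.card = ∑ s, (D ∩ B s).card := by
  have hDB : D = univ.biUnion fun s => D ∩ B s := by
    rw [← inter_biUnion, eq_comm, inter_eq_left]
    intro x hx
    simpa using hD x hx
  conv_lhs => rw [hDB]
  exact card_biUnion fun s _ s' _ hne =>
    (hB hne).mono inter_subset_right inter_subset_right

variable [Fintype α]

theorem sdiff_biUnion_sdiff_inter [Fintype ι] {A S : ι → Finset α}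
    (hA : Pairwise fun i j => Disjoint (A i) (A j)) (hS : ∀ i, S i ⊆ A i) (i : ι) :
    (univ \ univ.biUnion fun j => A j \ S j) ∩ A i = S i := by
  ext x
  simp only [mem_inter, mem_sdiff, mem_univ, mem_biUnion, true_and, not_exists, not_and, not_not]
  refine ⟨fun ⟨hx, hxA⟩ => hx i hxA, fun hx => ⟨fun j hxA => ?_, hS i hx⟩⟩
  obtain rfl : j = i := by
    by_contra hne
    exact disjoint_left.mp (hA hne) hxA (hS i hx)
  exact hx

theorem card_sdiff_biUnion_sdiff [Fintype ι] {A S : ι → Finset α}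
    (hA : Pairwise fun i j => Disjoint (A i) (A j)) (hS : ∀ i, S i ⊆ A i) :
    (univ \ univ.biUnion fun j => A j \ S j).card
      = Fintype.card α - ∑ j, ((A j).card - (S j).card) := by
  rw [card_sdiff_of_subset (subset_univ _), card_univ,
    card_biUnion fun i _ j _ hne => (hA hne).mono sdiff_subset sdiff_subset]
  simp only [card_sdiff_of_subset (hS _)]

end Finset

section Puncturing

variable {F : Type*} [Field F] {n : ℕ}

variable (F) in
def restrictSubset {S T : Finset (Fin n)} (h : S ⊆ T) :
    (T → F) →ₗ[F] (S → F) :=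
  LinearMap.funLeft F F fun j => ⟨j, h j.2⟩

theorem map_punctureTo_of_subset (C : Submodule F (Fin n → F)) {S T : Finset (Fin n)}
    (h : S ⊆ T) :
    C.map (punctureTo F S) = (C.map (punctureTo F T)).map (restrictSubset F h) := by
  rw [← Submodule.map_comp]
  rfl

theorem finrank_map_punctureTo_mono (C : Submodule F (Fin n → F)) {S T : Finset (Fin n)}
    (h : S ⊆ T) :
    finrank F (C.map (punctureTo F S)) ≤ finrank F (C.map (punctureTo F T)) := by
  rw [map_punctureTo_of_subset C h]
  exact Submodule.finrank_map_le _ _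

theorem map_punctureTo_eq_top_of_subset (C : Submodule F (Fin n → F)) {S T : Finset (Fin n)}
    (h : S ⊆ T) (hT : C.map (punctureTo F T) = ⊤) : C.map (punctureTo F S) = ⊤ := by
  rw [map_punctureTo_of_subset C h, hT, Submodule.map_top, LinearMap.range_eq_top]
  exact LinearMap.funLeft_surjective_of_injective F F _ fun _ _ hab =>
    Subtype.ext (Subtype.mk.inj hab)

theorem finrank_map_punctureTo_eq_card_iff (C : Submodule F (Fin n → F)) (S : Finset (Fin n)) :
    finrank F (C.map (punctureTo F S)) = S.card ↔ C.map (punctureTo F S) = ⊤ := by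
  rw [← Fintype.card_coe S, ← Module.finrank_fintype_fun_eq_card F]
  exact ⟨Submodule.eq_top_of_finrank_eq, fun h => by rw [h, finrank_top]⟩

theorem card_le_finrank_map_punctureTo (C : Submodule F (Fin n → F)) {S T : Finset (Fin n)}
    (h : S ⊆ T) (hS : C.map (punctureTo F S) = ⊤) :
    S.card ≤ finrank F (C.map (punctureTo F T)) :=
  (finrank_map_punctureTo_eq_card_iff C S).2 hS ▸ finrank_map_punctureTo_mono C h

variable [DecidableEq F]

def wordSupport {T : Finset (Fin n)} (x : T → F) : Finset (Fin n) :=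
  ({j | x j ≠ 0} : Finset T).map (Function.Embedding.subtype _)

theorem card_wordSupport {T : Finset (Fin n)} (x : T → F) :
    (wordSupport x).card = hammingNorm x :=
  Finset.card_map _

theorem wordSupport_subset {T : Finset (Fin n)} (x : T → F) : wordSupport x ⊆ T := by
  intro j hj
  obtain ⟨j, -, rfl⟩ := Finset.mem_map.mp hj
  exact j.2

theorem restrictSubset_eq_zero_iff {S T : Finset (Fin n)} (h : S ⊆ T) (x : T → F) :
    restrictSubset F h x = 0 ↔ Disjoint S (wordSupport x) := by
  simp only [funext_iff, restrictSubset, LinearMap.funLeft_apply, Pi.zero_apply, wordSupport,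
    Finset.disjoint_left, Finset.mem_map, Finset.mem_filter, Finset.mem_univ, true_and,
    Function.Embedding.coe_subtype, not_exists, not_and]
  refine ⟨fun H j hj y hy hyj => hy ?_, fun H j => by_contra fun hj => H j.2 ⟨j, h j.2⟩ hj rfl⟩
  subst hyj
  exact H ⟨y, hj⟩

theorem finrank_map_punctureTo_eq_of_card_sdiff_lt (C : Submodule F (Fin n → F))
    {S T : Finset (Fin n)} (h : S ⊆ T) {d : ℕ}
    (hd : ∀ x ∈ C.map (punctureTo F T), x ≠ 0 → d ≤ hammingNorm x) (hTS : (T \ S).card < d) :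
    finrank F (C.map (punctureTo F S)) = finrank F (C.map (punctureTo F T)) := by
  rw [map_punctureTo_of_subset C h, Submodule.finrank_map_eq_iff_disjoint_ker,
    LinearMap.disjoint_ker]
  intro x hx hx0
  by_contra hne
  have hsupp : wordSupport x ⊆ T \ S := fun j hj => Finset.mem_sdiff.mpr
    ⟨wordSupport_subset x hj,
      fun hjS => Finset.disjoint_left.mp ((restrictSubset_eq_zero_iff h x).1 hx0) hjS hj⟩
  have hweight : hammingNorm x ≤ (T \ S).card := card_wordSupport x ▸ Finset.card_le_card hsupp
  exact (hd x hx hne).not_gt (hweight.trans_lt hTS)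

theorem le_hammingNorm_of_forall_map_punctureTo_eq_top (C : Submodule F (Fin n → F))
    {T : Finset (Fin n)} {r h : ℕ} (hdim : finrank F (C.map (punctureTo F T)) = r)
    (hT : T.card = r + h)
    (hfull : ∀ S ⊆ T, S.card = r → C.map (punctureTo F S) = ⊤) :
    ∀ x ∈ C.map (punctureTo F T), x ≠ 0 → h + 1 ≤ hammingNorm x := by
  intro x hx hx0
  by_contra! hlt
  obtain ⟨S, hS, hScard⟩ : ∃ S ⊆ T \ wordSupport x, S.card = r := by
    refine Finset.exists_subset_card_eq ?_
    rw [Finset.card_sdiff_of_subset (wordSupport_subset x), card_wordSupport]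
    omega
  have hST : S ⊆ T := hS.trans Finset.sdiff_subset
  have hfinrank : finrank F (C.map (punctureTo F S)) = finrank F (C.map (punctureTo F T)) := by
    rw [(finrank_map_punctureTo_eq_card_iff C S).2 (hfull S hST hScard), hScard, hdim]
  rw [map_punctureTo_of_subset C hST, Submodule.finrank_map_eq_iff_disjoint_ker,
    LinearMap.disjoint_ker] at hfinrank
  refine hx0 (hfinrank x hx ((restrictSubset_eq_zero_iff hST x).2 ?_))
  exact Finset.disjoint_left.mpr fun j hj => (Finset.mem_sdiff.mp (hS hj)).2

end Puncturing

namespace IsHDLMRC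

variable {F : Type*} [Field F] [DecidableEq F] {k r1 r2 h1 h2 δ t1 t2 n : ℕ}
  (X : IsHDLMRC F k r1 r2 h1 h2 δ t1 t2 n)

theorem exists_subset_card_inter_B_eq (j : Fin t1) :
    ∃ S ⊆ X.A j, S.card = r1 ∧ ∀ s, (S ∩ X.B j s).card = r2 := by
  obtain ⟨S, hS, hScard, hSB⟩ := Finset.exists_subset_biUnion_card_inter_eq (X.hB_disj j)
    fun s => (X.hB_card j s).symm ▸ Nat.le_add_right r2 δ
  refine ⟨S, hS.trans (Finset.biUnion_subset.mpr fun s _ => X.hB_sub j s), ?_, hSB⟩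
  rw [hScard, Fintype.card_fin, X.hr1]

theorem exists_mr_superset {i : Fin t1} {S : Finset (Fin n)} (hSA : S ⊆ X.A i)
    (hScard : S.card = r1) (hSB : ∀ s, (S ∩ X.B i s).card ≤ r2) :
    ∃ E, S ⊆ E ∧ E.card = k + h1 ∧ (∀ j s, (E ∩ X.B j s).card ≤ r2) ∧
      ∀ j, (E ∩ X.A j).card = r1 := by
  choose T hTA hTcard hTB using X.exists_subset_card_inter_B_eq
  set M := Function.update T i S
  obtain ⟨hMA, hMcard, hMB⟩ : (∀ j, M j ⊆ X.A j) ∧ (∀ j, (M j).card = r1) ∧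
      ∀ j s, (M j ∩ X.B j s).card ≤ r2 := by
    simp only [← forall_and]
    exact (Function.forall_update_iff T
      fun j Y => Y ⊆ X.A j ∧ Y.card = r1 ∧ ∀ s, (Y ∩ X.B j s).card ≤ r2).2
      ⟨⟨hSA, hScard, hSB⟩, fun j _ => ⟨hTA j, hTcard j, fun s => (hTB j s).le⟩⟩
  set E := Finset.univ \ Finset.univ.biUnion fun j => X.A j \ M j
  have hEA : ∀ j, E ∩ X.A j = M j := Finset.sdiff_biUnion_sdiff_inter X.hA_disj hMA
  have hSE : S ⊆ E := by
    have hMi : M i = S := Function.update_self i S T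
    rw [← hMi, ← hEA i]
    exact Finset.inter_subset_left
  refine ⟨E, hSE, ?_, fun j s => ?_, fun j => by rw [hEA, hMcard]⟩
  · rw [Finset.card_sdiff_biUnion_sdiff X.hA_disj hMA]
    simp only [X.hA_card, hMcard, Finset.sum_const, Finset.card_univ, Fintype.card_fin,
      smul_eq_mul, add_assoc, Nat.add_sub_cancel_left, X.hn, X.hk]
    omega
  · rw [← Finset.inter_eq_right.mpr (X.hB_sub j s), ← Finset.inter_assoc, hEA]
    exact hMB j s

theorem map_punctureTo_eq_top_of_subset_A {i : Fin t1} {S : Finset (Fin n)} (hSA : S ⊆ X.A i)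
    (hScard : S.card = r1) (hSB : ∀ s, (S ∩ X.B i s).card ≤ r2) :
    X.C.map (punctureTo F S) = ⊤ := by
  obtain ⟨E, hSE, hEcard, hEB, hEA⟩ := X.exists_mr_superset hSA hScard hSB
  obtain ⟨hdimE, hdistE⟩ := X.hMR E hEcard hEB hEA
  have hr1k : r1 ≤ k := X.hk ▸ Nat.le_mul_of_pos_left r1 i.pos
  obtain ⟨K, hSK, hKE, hKcard⟩ :=
    Finset.exists_subsuperset_card_eq hSE (hScard ▸ hr1k) (by omega)
  refine map_punctureTo_eq_top_of_subset X.C hSK ((finrank_map_punctureTo_eq_card_iff _ _).1 ?_)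
  rw [finrank_map_punctureTo_eq_of_card_sdiff_lt X.C hKE hdistE
    (by rw [Finset.card_sdiff_of_subset hKE]; omega), hdimE, hKcard]

theorem card_A_sdiff {i : Fin t1} {D : Finset (Fin n)} (hDA : D ⊆ X.A i)
    (hDB : ∀ s, (D ∩ X.B i s).card = δ) (hD : ∀ j ∈ D, ∃ s, j ∈ X.B i s) :
    (X.A i \ D).card = r1 + h2 := by
  rw [Finset.card_sdiff_of_subset hDA, X.hA_card, Finset.card_eq_sum_card_inter (X.hB_disj i) hD]
  simp [hDB]

theorem card_A_sdiff_inter_B {i : Fin t1} {D : Finset (Fin n)}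
    (hDB : ∀ s, (D ∩ X.B i s).card = δ) (s : Fin t2) :
    (X.A i \ D ∩ X.B i s).card = r2 := by
  rw [Finset.sdiff_inter_right_comm, Finset.inter_eq_right.mpr (X.hB_sub i s),
    Finset.card_sdiff, hDB, X.hB_card]
  omega

end IsHDLMRC

theorem hdlmrc_middle_code_is_data_local_mrc_general
    (F : Type*) [Field F] [DecidableEq F]
    (k r1 r2 h1 h2 δ t1 t2 n : ℕ)
    (X : IsHDLMRC F k r1 r2 h1 h2 δ t1 t2 n) (i : Fin t1) :
    finrank F (X.C.map (punctureTo F (X.A i))) = r1 ∧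
      ∀ D : Finset (Fin n), D ⊆ X.A i →
        (∀ s, (D ∩ X.B i s).card = δ) → (∀ j ∈ D, ∃ s, j ∈ X.B i s) →
        finrank F (X.C.map (punctureTo F (X.A i \ D))) = r1 ∧
          ∀ x ∈ X.C.map (punctureTo F (X.A i \ D)), x ≠ 0 →
            h2 + 1 ≤ hammingNorm x := by
  obtain ⟨S₀, hS₀A, hS₀card, hS₀B⟩ := X.exists_subset_card_inter_B_eq i
  have hS₀full := X.map_punctureTo_eq_top_of_subset_A hS₀A hS₀card fun s => (hS₀B s).le
  refine ⟨le_antisymm (X.hmid i)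
    (hS₀card.ge.trans (card_le_finrank_map_punctureTo X.C hS₀A hS₀full)), ?_⟩
  intro D hDA hDB hD
  have hGcard := X.card_A_sdiff hDA hDB hD
  have hGfull : ∀ S ⊆ X.A i \ D, S.card = r1 → X.C.map (punctureTo F S) = ⊤ :=
    fun S hSG hScard => X.map_punctureTo_eq_top_of_subset_A (hSG.trans Finset.sdiff_subset) hScard
      fun s => (Finset.card_le_card (Finset.inter_subset_inter_right hSG)).trans
        (X.card_A_sdiff_inter_B hDB s).le
  obtain ⟨S, hSG, hScard⟩ := Finset.exists_subset_card_eq (hGcard ▸ Nat.le_add_right r1 h2)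
  have hdim : finrank F (X.C.map (punctureTo F (X.A i \ D))) = r1 :=
    le_antisymm ((finrank_map_punctureTo_mono X.C Finset.sdiff_subset).trans (X.hmid i))
      (hScard.ge.trans (card_le_finrank_map_punctureTo X.C hSG (hGfull S hSG hScard)))
  exact ⟨hdim, le_hammingNorm_of_forall_map_punctureTo_eq_top X.C hdim hGcard hGfull⟩

/-- **Middle codes of an HDL-MRC are data-local MRCs.** For every middle group `A i` of a
`[k, r₁, r₂, h₁, h₂, δ]` HDL-MRC, the punctured code `C|_{A i}` is an `[r₁, r₂, h₂, δ]`
data-local maximally recoverable code: it has dimension `r₁`, and deleting any `δ`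
coordinates from each of its local groups `B i s` yields an `[r₁+h₂, r₁, h₂+1]` MDS
code. -/
theorem hdlmrc_middle_code_is_data_local_mrc
    (F : Type*) [Field F] [DecidableEq F]
    (k r1 r2 h1 h2 δ t1 t2 n : ℕ)
    (hk : 0 < k) (hr2 : 0 < r2) (hδ : 0 < δ) (ht1 : 0 < t1) (ht2 : 0 < t2)
    (X : IsHDLMRC F k r1 r2 h1 h2 δ t1 t2 n) (i : Fin t1) :
    finrank F (X.C.map (punctureTo F (X.A i))) = r1 ∧
      ∀ D : Finset (Fin n), D ⊆ X.A i →
        (∀ s, (D ∩ X.B i s).card = δ) → (∀ j ∈ D, ∃ s, j ∈ X.B i s) →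
        finrank F (X.C.map (punctureTo F (X.A i \ D))) = r1 ∧
          ∀ x ∈ X.C.map (punctureTo F (X.A i \ D)), x ≠ 0 →
            h2 + 1 ≤ hammingNorm x :=
  hdlmrc_middle_code_is_data_local_mrc_general F k r1 r2 h1 h2 δ t1 t2 n X i
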